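/- Let A be a compact metrizable space, B a locally compact Hausdorff Baire space, and Φ : A → B continuous. Then either the image of Φ is meager in B, or Φ has a regular point, i.e. there exists x ∈ A such that for every neighborhood V of x, Φ(x) ∈ interior(Φ(V)). -/

import Mathlib

/-!
Fix a countable basis of `A`. If `Φ` has no regular point, every `x` has a neighbourhood `V`
with `Φ x ∉ interior (Φ '' V)`, hence a basic open `U ∋ x` with `closure U ⊆ V`, so that `Φ x`
lies in the frontier of `Φ '' closure U`, a closed set because a continuous map from a compact
space to a Hausdorff one is closed. Frontiers of closed sets are nowhere
dense, and there are only countably many sets `Φ '' closure U`, so the range of `Φ` is meagre.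
-/

open Set Topology TopologicalSpace

section

variable {A B : Type*} [TopologicalSpace A] [TopologicalSpace B]

def IsRegularPoint (Φ : A → B) (x : A) : Prop :=
  ∀ V ∈ 𝓝 x, Φ x ∈ interior (Φ '' V)

theorem IsClosed.isNowhereDense_frontier {s : Set B} (hs : IsClosed s) :
    IsNowhereDense (frontier s) :=
  isClosed_frontier.isNowhereDense_iff.mpr (interior_frontier hs)

theorem mem_frontier_image_closure_of_not_isRegularPoint [SecondCountableTopology A]
    [RegularSpace A] {Φ : A → B} {x : A} (hx : ¬IsRegularPoint Φ x) :
    ∃ U ∈ countableBasis A, Φ x ∈ frontier (Φ '' closure U) := by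
  obtain ⟨V, hV, hxV⟩ : ∃ V ∈ 𝓝 x, Φ x ∉ interior (Φ '' V) := by
    simpa [IsRegularPoint] using hx
  obtain ⟨W, hW, hW_closed, hWV⟩ := exists_mem_nhds_isClosed_subset hV
  obtain ⟨U, hU, hxU, hUW⟩ := (isBasis_countableBasis A).mem_nhds_iff.mp hW
  have hUV : closure U ⊆ V := (closure_minimal hUW hW_closed).trans hWV
  refine ⟨U, hU, subset_closure (mem_image_of_mem Φ (subset_closure hxU)), ?_⟩
  exact fun hx_int => hxV (interior_mono (image_mono hUV) hx_int)

theorem IsClosedMap.isMeagre_range_of_forall_not_isRegularPoint [SecondCountableTopology A]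
    [RegularSpace A] {Φ : A → B} (hΦ : IsClosedMap Φ) (h : ∀ x, ¬IsRegularPoint Φ x) :
    IsMeagre (range Φ) := by
  have hcover : range Φ ⊆ ⋃ U ∈ countableBasis A, frontier (Φ '' closure U) := by
    rintro _ ⟨x, rfl⟩
    simpa only [mem_iUnion₂, exists_prop] using
      mem_frontier_image_closure_of_not_isRegularPoint (h x)
  refine (isMeagre_biUnion (countable_countableBasis A) fun U _ => ?_).mono hcover
  exact (hΦ _ isClosed_closure).isNowhereDense_frontier.isMeagre

end

theorem stmt8_general {A B : Type*} [TopologicalSpace A] [CompactSpace A]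
    [TopologicalSpace.MetrizableSpace A]
    [TopologicalSpace B] [T2Space B]
    (Φ : A → B) (hΦ : Continuous Φ) :
    IsMeagre (Set.range Φ) ∨
      ∃ x : A, ∀ V ∈ nhds x, Φ x ∈ interior (Φ '' V) := by
  by_cases h : ∃ x, IsRegularPoint Φ x
  · exact Or.inr h
  · have : SecondCountableTopology A := by
      let := metrizableSpaceMetric A
      infer_instance
    push Not at h
    exact Or.inl (hΦ.isClosedMap.isMeagre_range_of_forall_not_isRegularPoint h)

/-- For a continuous map `Φ` from a compact metrizable space to a locally
compact Hausdorff Baire space, either the image of `Φ` is meager or `Φ` has a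
regular point. -/
theorem stmt8 {A B : Type*} [TopologicalSpace A] [CompactSpace A]
    [TopologicalSpace.MetrizableSpace A]
    [TopologicalSpace B] [LocallyCompactSpace B] [T2Space B] [BaireSpace B]
    (Φ : A → B) (hΦ : Continuous Φ) :
    IsMeagre (Set.range Φ) ∨
      ∃ x : A, ∀ V ∈ nhds x, Φ x ∈ interior (Φ '' V) :=
  stmt8_general Φ hΦ
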